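/- arXiv:1111.2234 — 4 statements merged into one kernel-verified Lean document; each statement's English description precedes it below -/
import Mathlib

section
/- The Perron root is log-convex in the log of the entries: if A and B are nonnegative n×n matrices, 0 ≤ α ≤ 1, and C is the matrix with entries C_{ij} = A_{ij}^α B_{ij}^{1−α} (with the convention 0^0·anything = 0 handled by requiring A_{ij}=0 iff B_{ij}=0, or simply A, B positive), then ρ(C) ≤ ρ(A)^α ρ(B)^{1−α}, where ρ denotes the spectral radius. -/
open Matrix

/-- The spectral radius of a (complexified) real matrix. -/
noncomputable def specRad {n : ℕ} (A : Matrix (Fin n) (Fin n) ℝ) : ENNReal :=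
  spectralRadius ℂ (A.map Complex.ofReal)

open Finset Filter Topology
open scoped NNReal ENNReal

/-!
Hölder's inequality `∑ aᵢ ^ α * bᵢ ^ (1 - α) ≤ (∑ aᵢ) ^ α * (∑ bᵢ) ^ (1 - α)` propagates through
matrix products, giving `(C ^ k)ᵢⱼ ≤ (A ^ k)ᵢⱼ ^ α * (B ^ k)ᵢⱼ ^ (1 - α)` for every `k`; applied once
more to row sums it gives `‖C ^ k‖ ≤ ‖A ^ k‖ ^ α * ‖B ^ k‖ ^ (1 - α)` in the `ℓ∞` operator norm.
Taking `k`-th roots and letting `k → ∞`, Gelfand's formula turns this into the inequality for the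
spectral radii.
-/

attribute [local instance] Matrix.linftyOpSeminormedAddCommGroup Matrix.linftyOpNormedRing
  Matrix.linftyOpNormedAlgebra

theorem Real.sum_rpow_mul_rpow_one_sub_le {ι : Type*} (s : Finset ι) {a b : ι → ℝ}
    (ha : ∀ i ∈ s, 0 ≤ a i) (hb : ∀ i ∈ s, 0 ≤ b i) {α : ℝ} (hα0 : 0 ≤ α) (hα1 : α ≤ 1) :
    ∑ i ∈ s, a i ^ α * b i ^ (1 - α) ≤ (∑ i ∈ s, a i) ^ α * (∑ i ∈ s, b i) ^ (1 - α) := by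
  rcases hα0.eq_or_lt with rfl | hα0
  · simp
  rcases hα1.eq_or_lt with rfl | hα1
  · simp
  have holder := inner_le_Lp_mul_Lq_of_nonneg s (Real.HolderConjugate.inv_one_sub_inv hα0 hα1)
    (fun i hi => Real.rpow_nonneg (ha i hi) α) (fun i hi => Real.rpow_nonneg (hb i hi) (1 - α))
  simp only [one_div, inv_inv] at holder
  rwa [sum_congr rfl fun i hi => Real.rpow_rpow_inv (ha i hi) hα0.ne',
    sum_congr rfl fun i hi => Real.rpow_rpow_inv (hb i hi) (sub_pos.2 hα1).ne'] at holder

namespace Matrix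

theorem pow_apply_le_rpow_mul_rpow {ι : Type*} [Fintype ι] [DecidableEq ι]
    {A B C : Matrix ι ι ℝ} {α : ℝ} (hα0 : 0 ≤ α) (hα1 : α ≤ 1)
    (hA : ∀ i j, 0 ≤ A i j) (hB : ∀ i j, 0 ≤ B i j) (hC0 : ∀ i j, 0 ≤ C i j)
    (hC : ∀ i j, C i j ≤ A i j ^ α * B i j ^ (1 - α)) (k : ℕ) (i j : ι) :
    (C ^ k) i j ≤ (A ^ k) i j ^ α * (B ^ k) i j ^ (1 - α) := by
  induction k generalizing j with
  | zero =>
    by_cases hij : i = j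
    · simp [hij]
    · simp only [pow_zero, one_apply_ne hij]
      positivity
  | succ k ih =>
    have hAk := pow_apply_nonneg hA k i
    have hBk := pow_apply_nonneg hB k i
    calc (C ^ (k + 1)) i j = ∑ l, (C ^ k) i l * C l j := by rw [pow_succ, mul_apply]
      _ ≤ ∑ l, ((A ^ k) i l * A l j) ^ α * ((B ^ k) i l * B l j) ^ (1 - α) := by
        refine sum_le_sum fun l _ => ?_
        calc (C ^ k) i l * C l j
            ≤ ((A ^ k) i l ^ α * (B ^ k) i l ^ (1 - α)) * (A l j ^ α * B l j ^ (1 - α)) :=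
              mul_le_mul (ih l) (hC l j) (hC0 l j)
                (mul_nonneg (Real.rpow_nonneg (hAk l) _) (Real.rpow_nonneg (hBk l) _))
          _ = _ := by
              rw [Real.mul_rpow (hAk l) (hA l j), Real.mul_rpow (hBk l) (hB l j)]
              ring
      _ ≤ (∑ l, (A ^ k) i l * A l j) ^ α * (∑ l, (B ^ k) i l * B l j) ^ (1 - α) :=
        Real.sum_rpow_mul_rpow_one_sub_le _ (fun l _ => mul_nonneg (hAk l) (hA l j))
          (fun l _ => mul_nonneg (hBk l) (hB l j)) hα0 hα1
      _ = (A ^ (k + 1)) i j ^ α * (B ^ (k + 1)) i j ^ (1 - α) := by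
        rw [pow_succ, pow_succ, mul_apply, mul_apply]

theorem sum_nnnorm_apply_le_linfty_opNNNorm {m n E : Type*} [Fintype m] [Fintype n]
    [SeminormedAddCommGroup E] (M : Matrix m n E) (i : m) : ∑ j, ‖M i j‖₊ ≤ ‖M‖₊ := by
  rw [linfty_opNNNorm_def]
  exact le_sup (f := fun i => ∑ j, ‖M i j‖₊) (mem_univ i)

theorem linfty_opNNNorm_le_rpow_mul_rpow {m n : Type*} [Fintype m] [Fintype n]
    {A B C : Matrix m n ℝ} {α : ℝ} (hα0 : 0 ≤ α) (hα1 : α ≤ 1)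
    (hA : ∀ i j, 0 ≤ A i j) (hB : ∀ i j, 0 ≤ B i j)
    (hC : ∀ i j, |C i j| ≤ A i j ^ α * B i j ^ (1 - α)) :
    ‖C‖₊ ≤ ‖A‖₊ ^ α * ‖B‖₊ ^ (1 - α) := by
  have row_sum_le (M : Matrix m n ℝ) (hM : ∀ i j, 0 ≤ M i j) (i : m) : ∑ j, M i j ≤ ‖M‖ := by
    simpa [Real.norm_of_nonneg (hM i _)] using
      NNReal.coe_le_coe.2 (sum_nnnorm_apply_le_linfty_opNNNorm M i)
  rw [linfty_opNNNorm_def]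
  refine Finset.sup_le fun i _ => ?_
  rw [← NNReal.coe_le_coe]
  push_cast
  calc ∑ j, ‖C i j‖ ≤ ∑ j, A i j ^ α * B i j ^ (1 - α) := sum_le_sum fun j _ => hC i j
    _ ≤ (∑ j, A i j) ^ α * (∑ j, B i j) ^ (1 - α) :=
      Real.sum_rpow_mul_rpow_one_sub_le _ (fun j _ => hA i j) (fun j _ => hB i j) hα0 hα1
    _ ≤ ‖A‖ ^ α * ‖B‖ ^ (1 - α) :=
      mul_le_mul (Real.rpow_le_rpow (sum_nonneg fun j _ => hA i j) (row_sum_le A hA i) hα0)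
        (Real.rpow_le_rpow (sum_nonneg fun j _ => hB i j) (row_sum_le B hB i) (by linarith))
        (Real.rpow_nonneg (sum_nonneg fun j _ => hB i j) _) (Real.rpow_nonneg (norm_nonneg A) _)

theorem linfty_opNNNorm_map_ofReal {m n : Type*} [Fintype m] [Fintype n] (M : Matrix m n ℝ) :
    ‖M.map ((↑) : ℝ → ℂ)‖₊ = ‖M‖₊ := by
  simp [linfty_opNNNorm_def, Complex.nnnorm_real]

end Matrix

namespace spectrum

variable {A : Type*} [NormedRing A] [NormedAlgebra ℂ A] [CompleteSpace A]

theorem spectralRadius_ne_top (a : A) : spectralRadius ℂ a ≠ ⊤ :=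
  ((spectralRadius_le_pow_nnnorm_pow_one_div ℂ a 0).trans_lt
    (by simpa using ENNReal.mul_lt_top ENNReal.coe_lt_top ENNReal.coe_lt_top)).ne

theorem spectralRadius_le_rpow_mul_rpow_of_nnnorm_pow_le {a b c : A} {α : ℝ}
    (hα0 : 0 ≤ α) (hα1 : α ≤ 1)
    (h : ∀ k : ℕ, ‖c ^ k‖₊ ≤ ‖a ^ k‖₊ ^ α * ‖b ^ k‖₊ ^ (1 - α)) :
    spectralRadius ℂ c ≤ spectralRadius ℂ a ^ α * spectralRadius ℂ b ^ (1 - α) := by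
  have hα1' : 0 ≤ 1 - α := sub_nonneg.2 hα1
  set r : A → ℕ → ℝ≥0∞ := fun x k => (‖x ^ k‖₊ : ℝ≥0∞) ^ (1 / k : ℝ)
  have hr (k : ℕ) : r c k ≤ r a k ^ α * r b k ^ (1 - α) := by
    have hk : (‖c ^ k‖₊ : ℝ≥0∞) ≤ (‖a ^ k‖₊ : ℝ≥0∞) ^ α * (‖b ^ k‖₊ : ℝ≥0∞) ^ (1 - α) := by
      rw [← ENNReal.coe_rpow_of_nonneg _ hα0, ← ENNReal.coe_rpow_of_nonneg _ hα1',
        ← ENNReal.coe_mul]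
      exact_mod_cast h k
    calc r c k ≤ ((‖a ^ k‖₊ : ℝ≥0∞) ^ α * (‖b ^ k‖₊ : ℝ≥0∞) ^ (1 - α)) ^ (1 / k : ℝ) :=
          ENNReal.rpow_le_rpow hk (by positivity)
      _ = r a k ^ α * r b k ^ (1 - α) := by
        rw [ENNReal.mul_rpow_of_nonneg _ _ (by positivity), ← ENNReal.rpow_mul,
          ← ENNReal.rpow_mul, mul_comm α, mul_comm (1 - α), ENNReal.rpow_mul, ENNReal.rpow_mul]
  have hlim : Tendsto (fun k => r a k ^ α * r b k ^ (1 - α)) atTop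
      (𝓝 (spectralRadius ℂ a ^ α * spectralRadius ℂ b ^ (1 - α))) :=
    ENNReal.Tendsto.mul
      ((ENNReal.continuous_rpow_const.tendsto _).comp (gelfand_formula a))
      (Or.inr (ENNReal.rpow_ne_top_of_nonneg hα1' (spectralRadius_ne_top b)))
      ((ENNReal.continuous_rpow_const.tendsto _).comp (gelfand_formula b))
      (Or.inr (ENNReal.rpow_ne_top_of_nonneg hα0 (spectralRadius_ne_top a)))
  exact le_of_tendsto_of_tendsto' (gelfand_formula c) hlim hr

end spectrum

/-- Log-convexity of the Perron root (spectral radius) in the log of the entries: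
if `A`, `B` are entrywise positive and `C_{ij} = A_{ij}^α B_{ij}^{1-α}` for `α ∈ [0,1]`,
then `ρ(C) ≤ ρ(A)^α ρ(B)^{1-α}`. -/
theorem perron_root_log_convex
    (n : ℕ) (A B C : Matrix (Fin n) (Fin n) ℝ) (α : ℝ)
    (hα0 : 0 ≤ α) (hα1 : α ≤ 1)
    (hA : ∀ i j, 0 < A i j) (hB : ∀ i j, 0 < B i j)
    (hC : ∀ i j, C i j = A i j ^ α * B i j ^ (1 - α)) :
    specRad C ≤ specRad A ^ α * specRad B ^ (1 - α) := by
  have hA0 i j : 0 ≤ A i j := (hA i j).le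
  have hB0 i j : 0 ≤ B i j := (hB i j).le
  have hC0 i j : 0 ≤ C i j :=
    hC i j ▸ mul_nonneg (Real.rpow_nonneg (hA0 i j) _) (Real.rpow_nonneg (hB0 i j) _)
  have map_ofReal_pow (M : Matrix (Fin n) (Fin n) ℝ) (k : ℕ) :
      (M.map Complex.ofReal) ^ k = (M ^ k).map Complex.ofReal :=
    (RingHom.map_pow Complex.ofRealHom.mapMatrix M k).symm
  refine spectrum.spectralRadius_le_rpow_mul_rpow_of_nnnorm_pow_le hα0 hα1 fun k => ?_
  simp only [map_ofReal_pow, linfty_opNNNorm_map_ofReal]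
  refine linfty_opNNNorm_le_rpow_mul_rpow hα0 hα1 (pow_apply_nonneg hA0 k)
    (pow_apply_nonneg hB0 k) fun i j => ?_
  rw [abs_of_nonneg (pow_apply_nonneg hC0 k i j)]
  exact pow_apply_le_rpow_mul_rpow hα0 hα1 hA0 hB0 hC0 (fun i j => (hC i j).le) k i j
end

section
/- Let M have a simple eigenvalue λ with right eigenvector u and left eigenvector v, v^T u = 1, P = uv^T, S = (M−λI)^{#}. Suppose the row vector [w^T, w_{n+1}] solves the system [w^T, w_{n+1}]·[[M−λI, −u],[∇N^T, 0]] = [−∇f^T, 0], where ∇N^T u = 1. Then w^T = (−∇f^T + (∇f^T u)∇N^T) S. -/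
/-!
Write `A = M - λI`. Pairing the first block row `wᵀA + w_{n+1}∇Nᵀ = -∇fᵀ` with `u ∈ ker A`
and using `∇Nᵀu = 1` gives `w_{n+1} = -∇fᵀu`. Multiplying the same row by `S` on the right,
`AS = I - uvᵀ` and `wᵀu = 0` give `wᵀAS = wᵀ`, which is the claimed formula.
-/

open Matrix

namespace Matrix

variable {ι R : Type*} [Fintype ι] [CommRing R]

theorem smul_eq_neg_dotProduct_of_vecMul_add_smul_eq_neg {A : Matrix ι ι R} {u w f g : ι → R}
    {c : R} (hAu : A *ᵥ u = 0) (hgu : g ⬝ᵥ u = 1) (h : w ᵥ* A + c • g = -f) :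
    c = -(f ⬝ᵥ u) := by
  have hu := congrArg (· ⬝ᵥ u) h
  simpa only [add_dotProduct, ← dotProduct_mulVec, hAu, dotProduct_zero, smul_dotProduct, hgu,
    smul_eq_mul, mul_one, zero_add, neg_dotProduct] using hu

theorem vecMul_mul_eq_self_of_mul_eq_one_sub_vecMulVec [DecidableEq ι] {A S : Matrix ι ι R} {u v w : ι → R}
    (hAS : A * S = 1 - vecMulVec u v) (hwu : w ⬝ᵥ u = 0) : w ᵥ* A ᵥ* S = w := by
  rw [vecMul_vecMul, hAS, vecMul_sub, vecMul_one, vecMul_vecMulVec, hwu, zero_smul, sub_zero]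

end Matrix

theorem bordered_system_solution_general
    (n : ℕ) (M : Matrix (Fin n) (Fin n) ℝ) (lam : ℝ) (u v gf gN : Fin n → ℝ)
    (hu : M.mulVec u = lam • u)
    (P S : Matrix (Fin n) (Fin n) ℝ)
    (hP : P = Matrix.vecMulVec u v)
    -- S is the group (Drazin) inverse of M - λI, with the spectral projector properties:
    (hS2 : (M - lam • 1) * S = 1 - P)
    (hgN : gN ⬝ᵥ u = 1)
    (w : Fin n → ℝ) (wlast : ℝ)
    -- the bordered linear system, written componentwise:
    (hsys1 : Matrix.vecMul w (M - lam • 1) + wlast • gN = -gf)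
    (hsys2 : w ⬝ᵥ u = 0) :
    w = Matrix.vecMul (-gf + (gf ⬝ᵥ u) • gN) S := by
  subst hP
  have hAu : (M - lam • 1) *ᵥ u = 0 := by
    rw [sub_mulVec, hu, smul_mulVec, one_mulVec, sub_self]
  have hwlast := smul_eq_neg_dotProduct_of_vecMul_add_smul_eq_neg hAu hgN hsys1
  have hwA : w ᵥ* (M - lam • 1) = -gf + (gf ⬝ᵥ u) • gN := by
    rw [← hsys1, hwlast]
    module
  rw [← hwA, vecMul_mul_eq_self_of_mul_eq_one_sub_vecMulVec hS2 hsys2]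

/-- If the row vector `[wᵀ, w_{n+1}]` solves the bordered system
`[wᵀ, w_{n+1}]·[[M-λI, -u],[∇Nᵀ, 0]] = [-∇fᵀ, 0]`, where `λ` is a simple eigenvalue of `M`
with eigenvectors `u`, `v`, `vᵀu = 1`, `P = uvᵀ` the spectral projector, `S = (M-λI)^#` the
group inverse and `∇Nᵀ u = 1`, then `wᵀ = (-∇fᵀ + (∇fᵀu)∇Nᵀ) S`. -/
theorem bordered_system_solution
    (n : ℕ) (M : Matrix (Fin n) (Fin n) ℝ) (lam : ℝ) (u v gf gN : Fin n → ℝ)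
    (hsimple : (Matrix.charpoly M).rootMultiplicity lam = 1)
    (hu : M.mulVec u = lam • u)
    (hv : Matrix.vecMul v M = lam • v)
    (hnorm : v ⬝ᵥ u = 1)
    (P S : Matrix (Fin n) (Fin n) ℝ)
    (hP : P = Matrix.vecMulVec u v)
    -- S is the group (Drazin) inverse of M - λI, with the spectral projector properties:
    (hS1 : S * (M - lam • 1) = 1 - P)
    (hS2 : (M - lam • 1) * S = 1 - P)
    (hS3 : S * P = 0) (hS4 : P * S = 0)
    (hgN : gN ⬝ᵥ u = 1)
    (w : Fin n → ℝ) (wlast : ℝ)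
    -- the bordered linear system, written componentwise:
    (hsys1 : Matrix.vecMul w (M - lam • 1) + wlast • gN = -gf)
    (hsys2 : w ⬝ᵥ u = 0) :
    w = Matrix.vecMul (-gf + (gf ⬝ᵥ u) • gN) S :=
  bordered_system_solution_general n M lam u v gf gN hu P S hP hS2 hgN w wlast hsys1 hsys2
end

section
/- Let A be a nonnegative n×n matrix such that the directed graph with an edge (i,j) whenever A_{ij} > 0 is strongly connected, let α ∈ (1/2, 1), and define θ(p) = C(α) + (1−α)φ(p) + (1−α)φ(−p) + (2α−1)log(Σ_{i,j} A_{ij} e^{p_i − p_j}), where φ is log-sum-exp. Then the Hessian ∇²θ(p) is positive semidefinite for all p, its nullspace is exactly the one-dimensional span of the all-ones vector e, and its spectral norm satisfies ‖∇²θ(p)‖₂ ≤ 6α − 2 < 4. -/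
open Matrix Finset

/-- The dual HOTS objective. -/
noncomputable def thetaHOTS {n : ℕ} (A : Matrix (Fin n) (Fin n) ℝ) (α C : ℝ)
    (p : Fin n → ℝ) : ℝ :=
  C + (1 - α) * Real.log (∑ i, Real.exp (p i)) + (1 - α) * Real.log (∑ i, Real.exp (-p i))
    + (2 * α - 1) * Real.log (∑ i, ∑ j, A i j * Real.exp (p i - p j))

/-- The Hessian matrix of a function `f : ℝⁿ → ℝ` at `p`. -/
noncomputable def hessianMatrix {n : ℕ} (f : (Fin n → ℝ) → ℝ) (p : Fin n → ℝ) :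
    Matrix (Fin n) (Fin n) ℝ :=
  Matrix.of fun i j => iteratedFDeriv ℝ 2 f p ![Pi.single i 1, Pi.single j 1]

/-!
Each logarithm in `θ` is a log-sum-exp `q ↦ log ∑ₖ wₖ exp (ℓₖ q)` of linear forms `ℓₖ` with
nonnegative weights, and its Hessian at `p` is the covariance of the `ℓₖ` under the weights
`wₖ exp (ℓₖ p)`. So `∇²θ(p)` is a nonnegative combination of the covariance forms of `y`, `-y` and
`(yᵢ - yⱼ)ᵢⱼ`. Covariances are positive semidefinite and vanish against constants; a variance is
at most any bound on the squares, and `yᵢ² ≤ ‖y‖²`, `(yᵢ - yⱼ)² ≤ 4‖y‖²` give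
`(1 - α) + (1 - α) + 4 (2α - 1) = 6α - 2`; and the first form has strictly positive weights
`exp pᵢ`, so its variance vanishes only on constant vectors.
-/

section WeightedCov

variable {ι : Type*} [Fintype ι]

-- `0` when `∑ k, w k = 0`, by the convention `x / 0 = 0`.
noncomputable def weightedCov (w u v : ι → ℝ) : ℝ :=
  (∑ k, w k * u k * v k) / (∑ k, w k) - (∑ k, w k * u k) * (∑ k, w k * v k) / (∑ k, w k) ^ 2

theorem weightedCov_self_eq (w u : ι → ℝ) :
    weightedCov w u u = (∑ k, ∑ l, w k * w l * (u k - u l) ^ 2) / (2 * (∑ k, w k) ^ 2) := by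
  have hexpand : ∑ k, ∑ l, w k * w l * (u k - u l) ^ 2
      = 2 * ((∑ k, w k) * (∑ k, w k * u k * u k) - (∑ k, w k * u k) ^ 2) := by
    have hrow : ∀ k, ∑ l, w k * w l * (u k - u l) ^ 2 = w k * u k * u k * (∑ l, w l)
        + w k * (∑ l, w l * u l * u l) - 2 * (w k * u k * (∑ l, w l * u l)) := fun k => by
      simp only [mul_sum, ← sum_add_distrib, ← sum_sub_distrib]
      exact sum_congr rfl fun l _ => by ring
    simp only [hrow, sum_sub_distrib, sum_add_distrib, ← sum_mul, ← mul_sum]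
    ring
  rcases eq_or_ne (∑ k, w k) 0 with hW | hW
  · simp [weightedCov, hW]
  · rw [weightedCov, hexpand]
    field_simp

variable {w : ι → ℝ}

theorem weightedCov_self_nonneg (hw : ∀ k, 0 ≤ w k) (u : ι → ℝ) : 0 ≤ weightedCov w u u := by
  rw [weightedCov_self_eq]
  exact div_nonneg (sum_nonneg fun k _ => sum_nonneg fun l _ =>
    mul_nonneg (mul_nonneg (hw k) (hw l)) (sq_nonneg _)) (by positivity)

theorem eq_of_weightedCov_self_eq_zero (hw : ∀ k, 0 ≤ w k) {u : ι → ℝ}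
    (h : weightedCov w u u = 0) {k l : ι} (hk : 0 < w k) (hl : 0 < w l) : u k = u l := by
  have hW : 0 < ∑ k, w k := hk.trans_le (single_le_sum (fun i _ => hw i) (mem_univ k))
  have hterm : ∀ a b, 0 ≤ w a * w b * (u a - u b) ^ 2 := fun a b =>
    mul_nonneg (mul_nonneg (hw a) (hw b)) (sq_nonneg _)
  rw [weightedCov_self_eq, div_eq_zero_iff, or_iff_left (by positivity),
    sum_eq_zero_iff_of_nonneg fun a _ => sum_nonneg fun b _ => hterm a b] at h
  have hkl := (sum_eq_zero_iff_of_nonneg fun b _ => hterm k b).1 (h k (mem_univ k)) l (mem_univ l)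
  have : (u k - u l) ^ 2 = 0 := by simpa [hk.ne', hl.ne'] using hkl
  linarith [pow_eq_zero_iff (n := 2) two_ne_zero |>.1 this]

theorem weightedCov_self_le (hw : ∀ k, 0 ≤ w k) {u : ι → ℝ} {M : ℝ} (hM : 0 ≤ M)
    (hu : ∀ k, u k ^ 2 ≤ M) : weightedCov w u u ≤ M := by
  have hmean : 0 ≤ (∑ k, w k * u k) * (∑ k, w k * u k) / (∑ k, w k) ^ 2 := by
    rw [← sq]; positivity
  have hmoment : (∑ k, w k * u k * u k) / (∑ k, w k) ≤ M := by
    rcases (sum_nonneg fun k _ => hw k : 0 ≤ ∑ k, w k).eq_or_lt with hW | hW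
    · simpa [← hW] using hM
    · rw [div_le_iff₀ hW, mul_sum]
      exact sum_le_sum fun k _ => by
        rw [mul_assoc, ← sq, mul_comm M]; exact mul_le_mul_of_nonneg_left (hu k) (hw k)
  rw [weightedCov]
  linarith

theorem weightedCov_const_right (w u : ι → ℝ) (c : ℝ) : weightedCov w u (fun _ => c) = 0 := by
  rcases eq_or_ne (∑ k, w k) 0 with hW | hW
  · simp [weightedCov, hW]
  · simp only [weightedCov, ← sum_mul]
    field_simp
    ring

end WeightedCov

theorem sq_le_dotProduct_self {ι : Type*} [Fintype ι] (y : ι → ℝ) (i : ι) : y i ^ 2 ≤ y ⬝ᵥ y := by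
  rw [sq]
  exact single_le_sum (f := fun i => y i * y i) (fun i _ => mul_self_nonneg _) (mem_univ i)

theorem dotProduct_hessianMatrix_mulVec {n : ℕ} (f : (Fin n → ℝ) → ℝ) (p u v : Fin n → ℝ) :
    u ⬝ᵥ hessianMatrix f p *ᵥ v = iteratedFDeriv ℝ 2 f p ![u, v] := by
  let B := (ContinuousLinearMap.coeLM ℝ).comp (fderiv ℝ (fderiv ℝ f) p).toLinearMap
  have hB : hessianMatrix f p = LinearMap.toMatrix₂' ℝ B := by
    ext i j
    simp [hessianMatrix, iteratedFDeriv_two_apply, B]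
  rw [hB, ← Matrix.toLinearMap₂'_apply', Matrix.toLinearMap₂'_toMatrix', iteratedFDeriv_two_apply]
  rfl

theorem hessianMatrix_mulVec_apply {n : ℕ} (f : (Fin n → ℝ) → ℝ) (p v : Fin n → ℝ) (i : Fin n) :
    (hessianMatrix f p *ᵥ v) i = iteratedFDeriv ℝ 2 f p ![Pi.single i 1, v] := by
  rw [← dotProduct_hessianMatrix_mulVec, single_one_dotProduct]

section WeightedLogSumExp

variable {ι E : Type*} [Fintype ι] [NormedAddCommGroup E] [NormedSpace ℝ E]

noncomputable def weightedLogSumExp (w : ι → ℝ) (ℓ : ι → E →L[ℝ] ℝ) (q : E) : ℝ :=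
  Real.log (∑ k, w k * Real.exp (ℓ k q))

theorem hasFDerivAt_mul_exp (c : ℝ) (ℓ : E →L[ℝ] ℝ) (q : E) :
    HasFDerivAt (fun q => c * Real.exp (ℓ q)) ((c * Real.exp (ℓ q)) • ℓ) q := by
  simpa [smul_smul] using ℓ.hasFDerivAt.exp.const_mul c

theorem hasFDerivAt_sum_mul_exp (c : ι → ℝ) (ℓ : ι → E →L[ℝ] ℝ) (q : E) :
    HasFDerivAt (fun q => ∑ k, c k * Real.exp (ℓ k q))
      (∑ k, (c k * Real.exp (ℓ k q)) • ℓ k) q :=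
  HasFDerivAt.fun_sum fun k _ => hasFDerivAt_mul_exp (c k) (ℓ k) q

variable {w : ι → ℝ}

theorem sum_mul_exp_pos (hw : ∀ k, 0 ≤ w k) (hw' : ∃ k, 0 < w k) (ℓ : ι → E →L[ℝ] ℝ) (q : E) :
    0 < ∑ k, w k * Real.exp (ℓ k q) := by
  obtain ⟨k, hk⟩ := hw'
  exact (mul_pos hk (Real.exp_pos _)).trans_le <|
    single_le_sum (f := fun k => w k * Real.exp (ℓ k q))
      (fun k _ => mul_nonneg (hw k) (Real.exp_pos _).le) (mem_univ k)

theorem weightedLogSumExp_of_forall_eq_zero (hw : ∀ k, w k = 0) (ℓ : ι → E →L[ℝ] ℝ) :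
    weightedLogSumExp w ℓ = fun _ => 0 := by
  funext q
  simp [weightedLogSumExp, hw]

theorem contDiff_weightedLogSumExp (hw : ∀ k, 0 ≤ w k) (ℓ : ι → E →L[ℝ] ℝ) {m : WithTop ℕ∞} :
    ContDiff ℝ m (weightedLogSumExp w ℓ) := by
  by_cases hw' : ∃ k, 0 < w k
  · exact (ContDiff.sum fun k _ => contDiff_const.mul (ℓ k).contDiff.exp).log
      fun q => (sum_mul_exp_pos hw hw' ℓ q).ne'
  · push Not at hw'
    rw [weightedLogSumExp_of_forall_eq_zero (fun k => le_antisymm (hw' k) (hw k))]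
    exact contDiff_const

theorem fderiv_weightedLogSumExp (hw : ∀ k, 0 ≤ w k) (hw' : ∃ k, 0 < w k)
    (ℓ : ι → E →L[ℝ] ℝ) : fderiv ℝ (weightedLogSumExp w ℓ) = fun q =>
      (∑ k, w k * Real.exp (ℓ k q))⁻¹ • ∑ k, (w k * Real.exp (ℓ k q)) • ℓ k := by
  funext q
  exact ((hasFDerivAt_sum_mul_exp w ℓ q).log (sum_mul_exp_pos hw hw' ℓ q).ne').fderiv

theorem iteratedFDeriv_two_weightedLogSumExp (hw : ∀ k, 0 ≤ w k) (ℓ : ι → E →L[ℝ] ℝ)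
    (p u v : E) : iteratedFDeriv ℝ 2 (weightedLogSumExp w ℓ) p ![u, v] =
      weightedCov (fun k => w k * Real.exp (ℓ k p)) (fun k => ℓ k u) (fun k => ℓ k v) := by
  by_cases hw' : ∃ k, 0 < w k
  · set S := fun q => ∑ k, w k * Real.exp (ℓ k q)
    have hS : HasFDerivAt (fun q => (S q)⁻¹) _ p :=
      (hasDerivAt_inv (sum_mul_exp_pos hw hw' ℓ p).ne').comp_hasFDerivAt p
        (hasFDerivAt_sum_mul_exp w ℓ p)
    have hT : HasFDerivAt (fun q => ∑ k, (w k * Real.exp (ℓ k q)) • ℓ k)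
        (∑ k, ((w k * Real.exp (ℓ k p)) • ℓ k).smulRight (ℓ k)) p :=
      HasFDerivAt.fun_sum fun k _ => (hasFDerivAt_mul_exp (w k) (ℓ k) p).smul_const (ℓ k)
    have hG : HasFDerivAt (fun q => (S q)⁻¹ • ∑ k, (w k * Real.exp (ℓ k q)) • ℓ k) _ p :=
      hS.smul hT
    rw [iteratedFDeriv_two_apply, fderiv_weightedLogSumExp hw hw', hG.fderiv]
    simp only [weightedCov, S, div_eq_inv_mul, Fin.isValue, cons_val_zero, cons_val_one,
      cons_val_fin_one, _root_.add_apply, _root_.smul_apply, _root_.sum_apply, _root_.neg_apply,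
      ContinuousLinearMap.smulRight_apply, neg_smul, smul_eq_mul]
    ring
  · push Not at hw'
    have hw0 : ∀ k, w k = 0 := fun k => le_antisymm (hw' k) (hw k)
    simp [weightedLogSumExp_of_forall_eq_zero hw0, weightedCov, hw0]

end WeightedLogSumExp

section HOTS

local notation "π" => ContinuousLinearMap.proj (R := ℝ) (φ := fun _ : Fin _ => ℝ)

variable {n : ℕ} (A : Matrix (Fin n) (Fin n) ℝ) (α C : ℝ)

theorem thetaHOTS_eq_weightedLogSumExp : thetaHOTS A α C = fun q => C +
    ((1 - α) • weightedLogSumExp (fun _ => 1) (fun i => π i) q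
      + (1 - α) • weightedLogSumExp (fun _ => 1) (fun i => -π i) q
      + (2 * α - 1) • weightedLogSumExp (fun k : Fin n × Fin n => A k.1 k.2)
          (fun k => π k.1 - π k.2) q) := by
  funext q
  simp [thetaHOTS, weightedLogSumExp, Fintype.sum_prod_type, add_assoc]

theorem iteratedFDeriv_two_thetaHOTS (hA : ∀ i j, 0 ≤ A i j) (p u v : Fin n → ℝ) :
    iteratedFDeriv ℝ 2 (thetaHOTS A α C) p ![u, v] =
      (1 - α) * weightedCov (fun k => Real.exp (p k)) u v
      + (1 - α) * weightedCov (fun k => Real.exp (-p k)) (fun k => -u k) (fun k => -v k)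
      + (2 * α - 1) * weightedCov (fun k : Fin n × Fin n => A k.1 k.2 * Real.exp (p k.1 - p k.2))
          (fun k => u k.1 - u k.2) (fun k => v k.1 - v k.2) := by
  have hone : ∀ _ : Fin n, (0 : ℝ) ≤ 1 := fun _ => zero_le_one
  have h₁ := (contDiff_weightedLogSumExp (m := (2 : ℕ)) hone fun i => π i).contDiffAt (x := p)
  have h₂ := (contDiff_weightedLogSumExp (m := (2 : ℕ)) hone fun i => -π i).contDiffAt (x := p)
  have h₃ := (contDiff_weightedLogSumExp (m := (2 : ℕ)) (fun k : Fin n × Fin n => hA k.1 k.2)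
    fun k => π k.1 - π k.2).contDiffAt (x := p)
  rw [thetaHOTS_eq_weightedLogSumExp]
  simp (disch := fun_prop) only [fun_iteratedFDeriv_add_apply, iteratedFDeriv_const_smul_apply',
    iteratedFDeriv_const_of_ne two_ne_zero]
  simp [iteratedFDeriv_two_weightedLogSumExp, hA]

end HOTS

section HOTSHessian

variable {n : ℕ} {A : Matrix (Fin n) (Fin n) ℝ} {α : ℝ} (C : ℝ)

theorem thetaHOTS_hessian_form_nonneg (hA : ∀ i j, 0 ≤ A i j) (hα₁ : 1 / 2 < α) (hα₂ : α < 1)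
    (p y : Fin n → ℝ) : 0 ≤ iteratedFDeriv ℝ 2 (thetaHOTS A α C) p ![y, y] := by
  rw [iteratedFDeriv_two_thetaHOTS A α C hA]
  have h₁ := weightedCov_self_nonneg (fun k => (Real.exp_pos (p k)).le) y
  have h₂ := weightedCov_self_nonneg (fun k => (Real.exp_pos (-p k)).le) (fun k => -y k)
  have h₃ := weightedCov_self_nonneg (fun k : Fin n × Fin n =>
    mul_nonneg (hA k.1 k.2) (Real.exp_pos (p k.1 - p k.2)).le) (fun k => y k.1 - y k.2)
  have : 0 ≤ 1 - α := by linarith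
  have : 0 ≤ 2 * α - 1 := by linarith
  positivity

theorem thetaHOTS_hessian_form_le (hA : ∀ i j, 0 ≤ A i j) (hα₁ : 1 / 2 < α) (hα₂ : α < 1)
    (p y : Fin n → ℝ) :
    iteratedFDeriv ℝ 2 (thetaHOTS A α C) p ![y, y] ≤ (6 * α - 2) * (y ⬝ᵥ y) := by
  rw [iteratedFDeriv_two_thetaHOTS A α C hA]
  have hy : 0 ≤ y ⬝ᵥ y := sum_nonneg fun i _ => mul_self_nonneg (y i)
  have h₁ := weightedCov_self_le (fun k => (Real.exp_pos (p k)).le) hy (sq_le_dotProduct_self y)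
  have h₂ := weightedCov_self_le (fun k => (Real.exp_pos (-p k)).le) hy
    (u := fun k => -y k) fun k => by simpa using sq_le_dotProduct_self y k
  have h₃ := weightedCov_self_le (fun k : Fin n × Fin n =>
    mul_nonneg (hA k.1 k.2) (Real.exp_pos (p k.1 - p k.2)).le) (by positivity : 0 ≤ 4 * (y ⬝ᵥ y))
    (u := fun k => y k.1 - y k.2) fun k => by
      nlinarith [sq_le_dotProduct_self y k.1, sq_le_dotProduct_self y k.2, sq_nonneg (y k.1 + y k.2)]
  have : 0 ≤ 1 - α := by linarith
  have : 0 ≤ 2 * α - 1 := by linarith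
  nlinarith

theorem exists_eq_const_of_thetaHOTS_hessian_form_eq_zero (hA : ∀ i j, 0 ≤ A i j)
    (hα₁ : 1 / 2 < α) (hα₂ : α < 1) {p y : Fin n → ℝ}
    (h : iteratedFDeriv ℝ 2 (thetaHOTS A α C) p ![y, y] = 0) : ∃ c : ℝ, y = fun _ => c := by
  rcases isEmpty_or_nonempty (Fin n) with hn | ⟨⟨i₀⟩⟩
  · exact ⟨0, funext fun i => hn.elim i⟩
  rw [iteratedFDeriv_two_thetaHOTS A α C hA] at h
  have h₁ := weightedCov_self_nonneg (fun k => (Real.exp_pos (p k)).le) y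
  have h₂ := weightedCov_self_nonneg (fun k => (Real.exp_pos (-p k)).le) (fun k => -y k)
  have h₃ := weightedCov_self_nonneg (fun k : Fin n × Fin n =>
    mul_nonneg (hA k.1 k.2) (Real.exp_pos (p k.1 - p k.2)).le) (fun k => y k.1 - y k.2)
  have hcov : weightedCov (fun k => Real.exp (p k)) y y = 0 := by
    have : 0 < 1 - α := by linarith
    have : 0 ≤ 2 * α - 1 := by linarith
    nlinarith
  exact ⟨y i₀, funext fun i => eq_of_weightedCov_self_eq_zero
    (fun k => (Real.exp_pos (p k)).le) hcov (Real.exp_pos _) (Real.exp_pos _)⟩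

theorem thetaHOTS_hessian_form_const_right (hA : ∀ i j, 0 ≤ A i j) (p u : Fin n → ℝ) (c : ℝ) :
    iteratedFDeriv ℝ 2 (thetaHOTS A α C) p ![u, fun _ => c] = 0 := by
  simp [iteratedFDeriv_two_thetaHOTS A α C hA, weightedCov_const_right]

end HOTSHessian

theorem hots_hessian_properties_general
    (n : ℕ) (A : Matrix (Fin n) (Fin n) ℝ) (α C : ℝ)
    (hA : ∀ i j, 0 ≤ A i j)
    (hα1 : 1 / 2 < α) (hα2 : α < 1)
    (p : Fin n → ℝ) :
    (∀ y : Fin n → ℝ, 0 ≤ y ⬝ᵥ (hessianMatrix (thetaHOTS A α C) p).mulVec y) ∧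
    (∀ y : Fin n → ℝ,
      (hessianMatrix (thetaHOTS A α C) p).mulVec y = 0 ↔ ∃ c : ℝ, y = fun _ => c) ∧
    (∀ y : Fin n → ℝ,
      y ⬝ᵥ (hessianMatrix (thetaHOTS A α C) p).mulVec y ≤ (6 * α - 2) * (y ⬝ᵥ y)) ∧
    6 * α - 2 < 4 := by
  refine ⟨fun y => ?_, fun y => ⟨fun h => ?_, ?_⟩, fun y => ?_, by linarith⟩
  · rw [dotProduct_hessianMatrix_mulVec]
    exact thetaHOTS_hessian_form_nonneg C hA hα1 hα2 p y
  · refine exists_eq_const_of_thetaHOTS_hessian_form_eq_zero C hA hα1 hα2 (p := p) ?_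
    rw [← dotProduct_hessianMatrix_mulVec, h, dotProduct_zero]
  · rintro ⟨c, rfl⟩
    funext i
    rw [hessianMatrix_mulVec_apply, thetaHOTS_hessian_form_const_right C hA]
    rfl
  · rw [dotProduct_hessianMatrix_mulVec]
    exact thetaHOTS_hessian_form_le C hA hα1 hα2 p y

/-- For `A` nonnegative irreducible and `α ∈ (1/2, 1)`, the Hessian of the dual HOTS objective
`θ` is positive semidefinite, its nullspace is exactly the span of the all-ones vector, and its
spectral norm is at most `6α - 2 < 4`
(stated via the quadratic form: `yᵀ∇²θ(p)y ≤ (6α-2)‖y‖₂²`). -/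
theorem hots_hessian_properties
    (n : ℕ) (A : Matrix (Fin n) (Fin n) ℝ) (α C : ℝ)
    (hA : ∀ i j, 0 ≤ A i j)
    (hirr : ∀ i j : Fin n, ∃ m : ℕ, 0 < (A ^ m) i j)
    (hα1 : 1 / 2 < α) (hα2 : α < 1)
    (p : Fin n → ℝ) :
    (∀ y : Fin n → ℝ, 0 ≤ y ⬝ᵥ (hessianMatrix (thetaHOTS A α C) p).mulVec y) ∧
    (∀ y : Fin n → ℝ,
      (hessianMatrix (thetaHOTS A α C) p).mulVec y = 0 ↔ ∃ c : ℝ, y = fun _ => c) ∧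
    (∀ y : Fin n → ℝ,
      y ⬝ᵥ (hessianMatrix (thetaHOTS A α C) p).mulVec y ≤ (6 * α - 2) * (y ⬝ᵥ y)) ∧
    6 * α - 2 < 4 :=
  hots_hessian_properties_general n A α C hA hα1 hα2 p
end

section
/- Local error bound for eigenvector iterations (specialization of Proposition 25 / Theorem 16 of Mayer adapted here): Let M ∈ ℝ^{n×n}, p ∈ ℝ^n, ũ ∈ ℝ^n with p^T ũ = 1, λ̃ ∈ ℝ, B = [[M − λ̃I, −ũ],[p^T, 0]], C ∈ ℝ^{(n+1)×(n+1)}, σ = ‖I_{n+1} − CB‖_∞, τ = ‖C‖_∞, and η = ‖C·[Mũ − λ̃ũ; 0]‖_∞. If σ < 1 and Δ = (1−σ)² − 4ητ ≥ 0, then β = 2η/(1−σ+√Δ) ≥ 0 and there exists a unique eigenpair (x*, λ*) of M with p^T x* = 1, |λ* − λ̃| ≤ β and ‖x* − ũ‖_∞ ≤ β. -/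
/-!
Write `z = (x - ũ, λ - λ̃)`. The eigenpairs with `pᵀx = 1` are the zeros of
`F z = F 0 + B z + r z`, where `r z = (-(λ - λ̃) • (x - ũ), 0)` is the only nonlinear term, and,
`C` being invertible because `‖I - CB‖ < 1`, they are the fixed points of the simplified Newton
map `G z = z - C F z`. Since `G z - G z' = (I - CB)(z - z') - C(r z - r z')`, on the closed ball of
radius `β` the map `G` is Lipschitz with constant `σ + 2τβ = 1 - √Δ ≤ 1`, and it maps the ball
into itself because `β` is the smaller root of `τβ² - (1 - σ)β + η`. A nonexpansive self-map of
a compact star-shaped set has a fixed point (approximate fixed points come from the contractions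
`t • G`, `t < 1`), which gives existence also in the borderline case `Δ = 0`. Uniqueness comes
from the sup-norm estimate `‖r z - r z'‖ ≤ (2β - ‖z - z'‖ / 2) ‖z - z'‖`, whose quadratic margin
rules out two fixed points even when `G` is only nonexpansive.
-/

open Set Metric Filter Topology Matrix

attribute [local instance] Matrix.linftyOpNormedRing

section FixedPoint
variable {E : Type*} [NormedAddCommGroup E] [NormedSpace ℝ E] {K : Set E} {f : E → E}

theorem exists_smul_fixedPoint_of_lipschitzOnWith_one (hK : IsComplete K)
    (hK0 : StarConvex ℝ 0 K) (hKne : K.Nonempty) (hmaps : MapsTo f K K)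
    (hf : LipschitzOnWith 1 f K) {t : ℝ} (ht0 : 0 ≤ t) (ht1 : t < 1) :
    ∃ x ∈ K, t • f x = x := by
  have htmaps : MapsTo (fun x => t • f x) K K := fun x hx =>
    hK0.smul_mem (hmaps hx) ht0 ht1.le
  have hcontr : ContractingWith ⟨t, ht0⟩ (htmaps.restrict _ K K) := by
    refine ⟨ht1, (htmaps.lipschitzOnWith_iff_restrict).mp ?_⟩
    refine LipschitzOnWith.of_dist_le_mul fun x hx y hy => ?_
    rw [dist_smul₀, Real.norm_of_nonneg ht0]
    show _ ≤ t * _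
    simpa only [NNReal.coe_one, one_mul] using
      mul_le_mul_of_nonneg_left (hf.dist_le_mul x hx y hy) ht0
  obtain ⟨x, hxK, hfix, -⟩ :=
    hcontr.exists_fixedPoint' hK htmaps (hK0.mem hKne) (edist_ne_top _ _)
  exact ⟨x, hxK, hfix⟩

theorem exists_fixedPoint_of_lipschitzOnWith_one (hK : IsCompact K)
    (hK0 : StarConvex ℝ 0 K) (hKne : K.Nonempty) (hmaps : MapsTo f K K)
    (hf : LipschitzOnWith 1 f K) : ∃ x ∈ K, f x = x := by
  have hcont : ContinuousOn (fun x => ‖f x - x‖) K :=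
    (hf.continuousOn.sub continuousOn_id).norm
  obtain ⟨x₀, hx₀K, hmin⟩ := hK.exists_isMinOn hKne hcont
  obtain ⟨R, hR⟩ := (hK.image_of_continuousOn hf.continuousOn).isBounded.exists_norm_le
  have hsmall : ∀ᶠ t in 𝓝[<] (1 : ℝ), ‖f x₀ - x₀‖ ≤ (1 - t) * R := by
    filter_upwards [Ioo_mem_nhdsLT (zero_lt_one' ℝ)] with t ht
    obtain ⟨x, hxK, hfix⟩ := exists_smul_fixedPoint_of_lipschitzOnWith_one hK.isComplete hK0
      hKne hmaps hf ht.1.le ht.2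
    calc ‖f x₀ - x₀‖ ≤ ‖f x - x‖ := hmin hxK
      _ = (1 - t) * ‖f x‖ := by
        nth_rewrite 2 [← hfix]
        rw [show f x - t • f x = (1 - t) • f x by rw [sub_smul, one_smul], norm_smul,
          Real.norm_of_nonneg (by linarith [ht.2])]
      _ ≤ (1 - t) * R :=
        mul_le_mul_of_nonneg_left (hR _ (mem_image_of_mem f hxK)) (by linarith [ht.2])
  have hlim : Tendsto (fun t : ℝ => (1 - t) * R) (𝓝[<] 1) (𝓝 0) := by
    have : Tendsto (fun t : ℝ => (1 - t) * R) (𝓝 1) (𝓝 ((1 - 1) * R)) :=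
      ((continuous_const.sub continuous_id).mul continuous_const).tendsto 1
    simpa using this.mono_left nhdsWithin_le_nhds
  exact ⟨x₀, hx₀K, sub_eq_zero.mp (norm_le_zero_iff.mp (ge_of_tendsto hlim hsmall))⟩

end FixedPoint

section SmallRoot
variable {σ τ η Δ β : ℝ}

lemma two_mul_mul_eq_one_sub_sub_sqrt (hσ : σ < 1) (hΔ : Δ = (1 - σ) ^ 2 - 4 * η * τ)
    (hΔ0 : 0 ≤ Δ) (hβ : β = 2 * η / (1 - σ + √Δ)) : 2 * τ * β = 1 - σ - √Δ := by
  have hden : 0 < 1 - σ + √Δ := by positivity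
  rw [hβ, mul_div_assoc', div_eq_iff hden.ne']
  linear_combination Real.sq_sqrt hΔ0 + hΔ

lemma add_mul_add_mul_sq_eq (hσ : σ < 1) (hΔ : Δ = (1 - σ) ^ 2 - 4 * η * τ)
    (hΔ0 : 0 ≤ Δ) (hβ : β = 2 * η / (1 - σ + √Δ)) : η + σ * β + τ * β ^ 2 = β := by
  have hden : 0 < 1 - σ + √Δ := by positivity
  have hη : β * (1 - σ + √Δ) = 2 * η := by rw [hβ, div_mul_cancel₀ _ hden.ne']
  linear_combination
    (-1 / 2 : ℝ) * hη + (β / 2) * two_mul_mul_eq_one_sub_sub_sqrt hσ hΔ hΔ0 hβ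

end SmallRoot

lemma Matrix.isUnit_of_norm_one_sub_mul_lt_one {ι : Type*} [Fintype ι] [DecidableEq ι]
    {B C : Matrix ι ι ℝ} (h : ‖1 - C * B‖ < 1) : IsUnit C := by
  -- the uniformity of the `L∞` operator norm is the product one only up to unfolding
  have : @CompleteSpace (Matrix ι ι ℝ) PseudoMetricSpace.toUniformSpace :=
    (inferInstance : CompleteSpace (Matrix ι ι ℝ))
  have hCB : IsUnit (C * B) := by simpa using isUnit_one_sub_of_norm_lt_one h
  rw [isUnit_iff_isUnit_det, det_mul] at hCB
  rw [isUnit_iff_isUnit_det]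
  exact isUnit_of_mul_isUnit_left hCB

section SimplifiedNewton
variable {ι : Type*} [Fintype ι] {F r : (ι → ℝ) → ι → ℝ} {B C : Matrix ι ι ℝ}

def simplifiedNewton (C : Matrix ι ι ℝ) (F : (ι → ℝ) → ι → ℝ) (z : ι → ℝ) : ι → ℝ :=
  z - C *ᵥ F z

variable [DecidableEq ι] {σ τ η β : ℝ}

lemma simplifiedNewton_eq_self_iff (hC : IsUnit C) {z : ι → ℝ} :
    simplifiedNewton C F z = z ↔ F z = 0 := by
  rw [simplifiedNewton, sub_eq_self,
    (mulVec_injective_iff_isUnit.mpr hC).eq_iff' (mulVec_zero C)]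

lemma simplifiedNewton_sub (hF : ∀ z, F z = F 0 + B *ᵥ z + r z) (z z' : ι → ℝ) :
    simplifiedNewton C F z - simplifiedNewton C F z' =
      (1 - C * B) *ᵥ (z - z') - C *ᵥ (r z - r z') := by
  simp only [simplifiedNewton, hF z, hF z', sub_mulVec, one_mulVec, ← mulVec_mulVec,
    mulVec_sub, mulVec_add]
  abel

lemma norm_simplifiedNewton_sub_le (hF : ∀ z, F z = F 0 + B *ᵥ z + r z) (z z' : ι → ℝ) :
    ‖simplifiedNewton C F z - simplifiedNewton C F z'‖ ≤
      ‖1 - C * B‖ * ‖z - z'‖ + ‖C‖ * ‖r z - r z'‖ := by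
  rw [simplifiedNewton_sub hF]
  exact (norm_sub_le _ _).trans
    (add_le_add (linfty_opNorm_mulVec _ _) (linfty_opNorm_mulVec _ _))

lemma norm_simplifiedNewton_le (hF : ∀ z, F z = F 0 + B *ᵥ z + r z)
    (hr : ∀ z, ‖r z‖ ≤ ‖z‖ ^ 2) (hσ : ‖1 - C * B‖ ≤ σ) (hτ : ‖C‖ ≤ τ)
    (hη : ‖C *ᵥ F 0‖ ≤ η) {z : ι → ℝ} (hz : ‖z‖ ≤ β) :
    ‖simplifiedNewton C F z‖ ≤ η + σ * β + τ * β ^ 2 := by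
  have hr0 : r 0 = 0 := by simpa using hF 0
  have hG0 : ‖simplifiedNewton C F 0‖ ≤ η := by simpa [simplifiedNewton] using hη
  have hGz := norm_simplifiedNewton_sub_le hF z 0 (C := C)
  rw [sub_zero, hr0, sub_zero] at hGz
  have hlin : ‖1 - C * B‖ * ‖z‖ ≤ σ * β :=
    mul_le_mul hσ hz (norm_nonneg _) ((norm_nonneg _).trans hσ)
  have hquad : ‖C‖ * ‖r z‖ ≤ τ * β ^ 2 :=
    mul_le_mul hτ ((hr z).trans (pow_le_pow_left₀ (norm_nonneg _) hz 2)) (norm_nonneg _)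
      ((norm_nonneg _).trans hτ)
  linarith [norm_le_norm_add_norm_sub' (simplifiedNewton C F z) (simplifiedNewton C F 0)]

lemma norm_simplifiedNewton_sub_le_of_norm_le (hF : ∀ z, F z = F 0 + B *ᵥ z + r z)
    (hr' : ∀ z z', ‖z‖ ≤ β → ‖z'‖ ≤ β → ‖r z - r z'‖ ≤ (2 * β - ‖z - z'‖ / 2) * ‖z - z'‖)
    (hσ : ‖1 - C * B‖ ≤ σ) (hτ : ‖C‖ ≤ τ) {z z' : ι → ℝ} (hz : ‖z‖ ≤ β) (hz' : ‖z'‖ ≤ β) :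
    ‖simplifiedNewton C F z - simplifiedNewton C F z'‖ ≤
      σ * ‖z - z'‖ + τ * ((2 * β - ‖z - z'‖ / 2) * ‖z - z'‖) := by
  have hτ0 : 0 ≤ τ := (norm_nonneg _).trans hτ
  refine (norm_simplifiedNewton_sub_le hF z z').trans ?_
  gcongr
  exact hr' z z' hz hz'

theorem existsUnique_zero_of_quadratic_remainder (hF : ∀ z, F z = F 0 + B *ᵥ z + r z)
    (hr : ∀ z, ‖r z‖ ≤ ‖z‖ ^ 2)
    (hr' : ∀ z z', ‖z‖ ≤ β → ‖z'‖ ≤ β → ‖r z - r z'‖ ≤ (2 * β - ‖z - z'‖ / 2) * ‖z - z'‖)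
    (hσ : ‖1 - C * B‖ ≤ σ) (hσ1 : σ < 1) (hτ : ‖C‖ ≤ τ) (hη : ‖C *ᵥ F 0‖ ≤ η)
    (hβ0 : 0 ≤ β) (hβ : η + σ * β + τ * β ^ 2 ≤ β) (hβ' : σ + 2 * τ * β ≤ 1) :
    ∃! z, z ∈ closedBall 0 β ∧ F z = 0 := by
  have hτ0 : 0 ≤ τ := (norm_nonneg _).trans hτ
  have hfixed : ∀ z, simplifiedNewton C F z = z ↔ F z = 0 := fun _ =>
    simplifiedNewton_eq_self_iff (isUnit_of_norm_one_sub_mul_lt_one (hσ.trans_lt hσ1))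
  have hcontract : ∀ z ∈ closedBall (0 : ι → ℝ) β, ∀ z' ∈ closedBall (0 : ι → ℝ) β,
      ‖simplifiedNewton C F z - simplifiedNewton C F z'‖ ≤
        σ * ‖z - z'‖ + τ * ((2 * β - ‖z - z'‖ / 2) * ‖z - z'‖) := fun z hz z' hz' =>
    norm_simplifiedNewton_sub_le_of_norm_le hF hr' hσ hτ
      (mem_closedBall_zero_iff.mp hz) (mem_closedBall_zero_iff.mp hz')
  have hmaps : MapsTo (simplifiedNewton C F) (closedBall 0 β) (closedBall 0 β) := fun z hz =>
    mem_closedBall_zero_iff.mpr <|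
      (norm_simplifiedNewton_le hF hr hσ hτ hη (mem_closedBall_zero_iff.mp hz)).trans hβ
  have hlip : LipschitzOnWith 1 (simplifiedNewton C F) (closedBall 0 β) :=
    LipschitzOnWith.of_dist_le_mul fun z hz z' hz' => by
      rw [dist_eq_norm, dist_eq_norm, NNReal.coe_one, one_mul]
      nlinarith [hcontract z hz z' hz', mul_le_mul_of_nonneg_right hβ' (norm_nonneg (z - z')),
        mul_nonneg hτ0 (sq_nonneg ‖z - z'‖)]
  obtain ⟨z, hz, hGz⟩ := exists_fixedPoint_of_lipschitzOnWith_one (isCompact_closedBall 0 β)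
    ((convex_closedBall 0 β).starConvex (mem_closedBall_self hβ0))
    ⟨0, mem_closedBall_self hβ0⟩ hmaps hlip
  refine ⟨z, ⟨hz, (hfixed z).mp hGz⟩, fun z' ⟨hz', hFz'⟩ => ?_⟩
  have hd := hcontract z' hz' z hz
  rw [(hfixed z').mpr hFz', hGz] at hd
  by_contra hne
  have hd0 : 0 < ‖z' - z‖ := norm_pos_iff.mpr (sub_ne_zero.mpr hne)
  have h1 : 1 ≤ σ + τ * (2 * β - ‖z' - z‖ / 2) := le_of_mul_le_mul_right (by linarith) hd0
  have hτz : τ = 0 := by nlinarith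
  rw [hτz] at h1
  linarith

end SimplifiedNewton

lemma abs_add_add_abs_sub_le {a a' ρ : ℝ} (ha : |a| ≤ ρ) (ha' : |a'| ≤ ρ) :
    |a + a'| + |a - a'| ≤ 2 * ρ := by
  rw [abs_le] at ha ha'
  rcases abs_cases (a + a') with ⟨h1, -⟩ | ⟨h1, -⟩ <;>
    rcases abs_cases (a - a') with ⟨h2, -⟩ | ⟨h2, -⟩ <;> linarith

lemma abs_mul_sub_mul_le {a a' b b' ρ d : ℝ} (ha : |a| ≤ ρ) (ha' : |a'| ≤ ρ) (hb : |b| ≤ ρ)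
    (hb' : |b'| ≤ ρ) (hda : |a - a'| ≤ d) (hdb : |b - b'| ≤ d) (hd : d ≤ 2 * ρ) :
    |a * b - a' * b'| ≤ (2 * ρ - d / 2) * d := by
  have hpol : 2 * (a * b - a' * b') = (a + a') * (b - b') + (a - a') * (b + b') := by ring
  have hA := abs_add_add_abs_sub_le ha ha'
  have hB := abs_add_add_abs_sub_le hb hb'
  have h2 : 2 * |a * b - a' * b'| ≤ |a + a'| * |b - b'| + |a - a'| * |b + b'| := by
    rw [← abs_two, ← abs_mul, hpol, ← abs_mul, ← abs_mul]
    exact abs_add_le _ _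
  have hA0 := abs_nonneg (a - a')
  have hB0 := abs_nonneg (b - b')
  nlinarith [mul_le_mul_of_nonneg_right (le_sub_iff_add_le.mpr hA) hB0,
    mul_le_mul_of_nonneg_left (le_sub_iff_add_le.mpr hB) hA0,
    mul_nonneg (sub_nonneg.mpr hd) (sub_nonneg.mpr hda),
    mul_nonneg (sub_nonneg.mpr hd) (sub_nonneg.mpr hdb),
    mul_nonneg (sub_nonneg.mpr hda) (sub_nonneg.mpr hdb), mul_nonneg hA0 hB0]

section Eigenproblem
variable {ι : Type*} [Fintype ι]

def eigenCoords (ut : ι → ℝ) (lamt : ℝ) : (ι → ℝ) × ℝ ≃ (ι ⊕ Unit → ℝ) where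
  toFun xl := Sum.elim (xl.1 - ut) fun _ => xl.2 - lamt
  invFun z := (ut + z ∘ Sum.inl, lamt + z (Sum.inr ()))
  left_inv xl := by ext <;> simp
  right_inv z := by ext (i | _) <;> simp

def eigenResidual (M : Matrix ι ι ℝ) (p : ι → ℝ) (xl : (ι → ℝ) × ℝ) : ι ⊕ Unit → ℝ :=
  Sum.elim (M *ᵥ xl.1 - xl.2 • xl.1) fun _ => p ⬝ᵥ xl.1 - 1

def eigenRemainder (z : ι ⊕ Unit → ℝ) : ι ⊕ Unit → ℝ :=
  Sum.elim (-(z (Sum.inr ()) • z ∘ Sum.inl)) 0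

def borderedMatrix [DecidableEq ι] (M : Matrix ι ι ℝ) (lamt : ℝ) (ut p : ι → ℝ) :
    Matrix (ι ⊕ Unit) (ι ⊕ Unit) ℝ :=
  fromBlocks (M - lamt • 1) (of fun i _ => -ut i) (of fun _ j => p j) 0

lemma eigenResidual_eq_zero_iff {M : Matrix ι ι ℝ} {p : ι → ℝ} {xl : (ι → ℝ) × ℝ} :
    eigenResidual M p xl = 0 ↔ M *ᵥ xl.1 = xl.2 • xl.1 ∧ p ⬝ᵥ xl.1 = 1 := by
  simp [eigenResidual, ← Sum.elim_zero_zero, funext_iff, sub_eq_zero]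

lemma eigenCoords_mem_closedBall_iff {ut : ι → ℝ} {lamt β : ℝ} (hβ : 0 ≤ β)
    {xl : (ι → ℝ) × ℝ} :
    eigenCoords ut lamt xl ∈ closedBall 0 β ↔ |xl.2 - lamt| ≤ β ∧ ‖xl.1 - ut‖ ≤ β := by
  simp [eigenCoords, pi_norm_le_iff_of_nonneg hβ, and_comm]

omit [Fintype ι] in
lemma eigenCoords_symm_zero (ut : ι → ℝ) (lamt : ℝ) : (eigenCoords ut lamt).symm 0 = (ut, lamt) :=
  Prod.ext (add_zero ut) (add_zero lamt)

lemma eigenResidual_mk_of_dotProduct_eq_one {M : Matrix ι ι ℝ} {p ut : ι → ℝ}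
    (hput : p ⬝ᵥ ut = 1) (lamt : ℝ) :
    eigenResidual M p (ut, lamt) = Sum.elim (M *ᵥ ut - lamt • ut) fun _ => 0 := by
  simp [eigenResidual, hput]

lemma borderedMatrix_mulVec [DecidableEq ι] (M : Matrix ι ι ℝ) (lamt : ℝ) (ut p : ι → ℝ)
    (z : ι ⊕ Unit → ℝ) : borderedMatrix M lamt ut p *ᵥ z =
      Sum.elim (M *ᵥ z ∘ Sum.inl - lamt • z ∘ Sum.inl - z (Sum.inr ()) • ut)
        fun _ => p ⬝ᵥ z ∘ Sum.inl := by
  rw [borderedMatrix, fromBlocks_mulVec, sub_mulVec, smul_mulVec, one_mulVec, zero_mulVec]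
  ext (i | _) <;> simp [Matrix.mulVec, dotProduct, sub_eq_add_neg, mul_comm]

lemma eigenResidual_eigenCoords_symm [DecidableEq ι] (M : Matrix ι ι ℝ) (lamt : ℝ) {ut p : ι → ℝ}
    (hput : p ⬝ᵥ ut = 1) (z : ι ⊕ Unit → ℝ) :
    eigenResidual M p ((eigenCoords ut lamt).symm z) =
      eigenResidual M p (ut, lamt) + borderedMatrix M lamt ut p *ᵥ z + eigenRemainder z := by
  ext (i | _)
  · simp only [eigenResidual, eigenCoords, Equiv.symm_mk, Equiv.coe_fn_mk, mulVec_add, smul_add,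
      Sum.elim_inl, Pi.sub_apply, Pi.add_apply, Pi.smul_apply, smul_eq_mul, Function.comp_apply,
      borderedMatrix_mulVec, eigenRemainder, Pi.neg_apply]
    ring
  · simp [eigenResidual, eigenCoords, borderedMatrix_mulVec, eigenRemainder, dotProduct_add, hput]

lemma norm_eigenRemainder_le (z : ι ⊕ Unit → ℝ) : ‖eigenRemainder z‖ ≤ ‖z‖ ^ 2 := by
  refine (pi_norm_le_iff_of_nonneg (sq_nonneg _)).mpr fun j => ?_
  rcases j with i | _
  · simpa [eigenRemainder, sq] using
      mul_le_mul (norm_le_pi_norm z _) (norm_le_pi_norm z _) (norm_nonneg _) (norm_nonneg _)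
  · simp [eigenRemainder]

lemma norm_eigenRemainder_sub_le {z z' : ι ⊕ Unit → ℝ} {ρ : ℝ} (hz : ‖z‖ ≤ ρ) (hz' : ‖z'‖ ≤ ρ) :
    ‖eigenRemainder z - eigenRemainder z'‖ ≤ (2 * ρ - ‖z - z'‖ / 2) * ‖z - z'‖ := by
  have hd : ‖z - z'‖ ≤ 2 * ρ := by linarith [norm_sub_le z z']
  have hbound : 0 ≤ (2 * ρ - ‖z - z'‖ / 2) * ‖z - z'‖ :=
    mul_nonneg (by linarith [norm_nonneg z]) (norm_nonneg _)
  have hcoord : ∀ w : ι ⊕ Unit → ℝ, ∀ j, |w j| ≤ ‖w‖ := fun w j => norm_le_pi_norm w j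
  refine (pi_norm_le_iff_of_nonneg hbound).mpr fun j => ?_
  rcases j with i | _
  · have key := abs_mul_sub_mul_le ((hcoord z _).trans hz) ((hcoord z' _).trans hz')
      ((hcoord z (.inl i)).trans hz) ((hcoord z' (.inl i)).trans hz')
      (hcoord (z - z') (.inr ())) (hcoord (z - z') (.inl i)) hd
    rw [Real.norm_eq_abs, ← abs_neg]
    convert key using 2
    simp only [eigenRemainder, Pi.sub_apply, Sum.elim_inl, Pi.neg_apply, Pi.smul_apply,
      Function.comp_apply, smul_eq_mul]
    ring
  · simpa [eigenRemainder] using hbound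

end Eigenproblem

/-- Mayer-type verified error bound for an approximate eigenpair: with
`B = [[M - λ̃I, -ũ],[pᵀ, 0]]`, `C` an approximate inverse of `B`, `σ = ‖I - CB‖∞ < 1`,
`τ = ‖C‖∞`, `η = ‖C·[Mũ - λ̃ũ; 0]‖∞` and `Δ = (1-σ)² - 4ητ ≥ 0`, the quantity
`β = 2η/(1-σ+√Δ)` is nonnegative and there is a unique eigenpair `(x*, λ*)` of `M` with
`pᵀx* = 1`, `|λ* - λ̃| ≤ β` and `‖x* - ũ‖∞ ≤ β`. -/
theorem mayer_eigenpair_error_bound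
    (n : ℕ) (M : Matrix (Fin n) (Fin n) ℝ) (lamt : ℝ) (ut p : Fin n → ℝ)
    (hput : p ⬝ᵥ ut = 1)
    (B C : Matrix (Fin n ⊕ Unit) (Fin n ⊕ Unit) ℝ)
    (hB : B = Matrix.fromBlocks (M - lamt • (1 : Matrix (Fin n) (Fin n) ℝ))
      (Matrix.of fun i (_ : Unit) => -ut i)
      (Matrix.of fun (_ : Unit) j => p j)
      (0 : Matrix Unit Unit ℝ))
    (σ τ η Δ β : ℝ)
    (hσ : σ = ‖(1 : Matrix (Fin n ⊕ Unit) (Fin n ⊕ Unit) ℝ) - C * B‖)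
    (hτ : τ = ‖C‖)
    (hη : η = ‖C.mulVec (Sum.elim (M.mulVec ut - lamt • ut) (fun _ : Unit => 0))‖)
    (hσlt : σ < 1)
    (hΔ : Δ = (1 - σ) ^ 2 - 4 * η * τ) (hΔ0 : 0 ≤ Δ)
    (hβ : β = 2 * η / (1 - σ + Real.sqrt Δ)) :
    0 ≤ β ∧
    ∃! xl : (Fin n → ℝ) × ℝ,
      M.mulVec xl.1 = xl.2 • xl.1 ∧ p ⬝ᵥ xl.1 = 1 ∧
        |xl.2 - lamt| ≤ β ∧ ‖xl.1 - ut‖ ≤ β := by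
  have hβ0 : 0 ≤ β := by
    rw [hβ]
    exact div_nonneg (by rw [hη]; positivity) (by linarith [Real.sqrt_nonneg Δ])
  have hslope : σ + 2 * τ * β ≤ 1 := by
    linarith [two_mul_mul_eq_one_sub_sub_sqrt hσlt hΔ hΔ0 hβ, Real.sqrt_nonneg Δ]
  have hF : ∀ z, eigenResidual M p ((eigenCoords ut lamt).symm z) =
      eigenResidual M p ((eigenCoords ut lamt).symm 0) + B *ᵥ z + eigenRemainder z := by
    rw [eigenCoords_symm_zero, hB]
    exact eigenResidual_eigenCoords_symm M lamt hput
  have hη' : ‖C *ᵥ eigenResidual M p ((eigenCoords ut lamt).symm 0)‖ ≤ η := by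
    rw [eigenCoords_symm_zero, eigenResidual_mk_of_dotProduct_eq_one hput, hη]
  have hzeros := existsUnique_zero_of_quadratic_remainder hF norm_eigenRemainder_le
    (fun _ _ => norm_eigenRemainder_sub_le) hσ.ge hσlt hτ.ge hη' hβ0
    (add_mul_add_mul_sq_eq hσlt hΔ hΔ0 hβ).le hslope
  refine ⟨hβ0, (Equiv.existsUnique_congr (eigenCoords ut lamt) fun xl => ?_).mpr hzeros⟩
  rw [eigenCoords_mem_closedBall_iff hβ0, Equiv.symm_apply_apply, eigenResidual_eq_zero_iff]
  tauto
end
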